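/- arXiv:1610.04824 — 2 statements merged into one kernel-verified Lean document; each statement's English description precedes it below -/
import Mathlib

section
/- (Strauss inequality) Let n ≥ 2 and let φ : ℝⁿ → ℝ be smooth and compactly supported (or decaying sufficiently fast as |x| → ∞). Then ‖ r^{(n−1)/2} φ ‖_{L_r^∞ L_ω^2(ℝⁿ)} ≤ √2 · ‖∂_r φ‖_{L²(ℝⁿ)}^{1/2} · ‖φ‖_{L²(ℝⁿ)}^{1/2}, where ∂_r = (x/|x|)·∇ is the radial derivative. -/
open MeasureTheory Real Set
open scoped ENNReal NNReal

noncomputable section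

/-- Euclidean space ℝⁿ. -/
abbrev Esp (n : ℕ) := EuclideanSpace ℝ (Fin n)

/-- Time derivative ∂_t of a function of (t, x). -/
def dt' {n : ℕ} (f : ℝ → Esp n → ℝ) : ℝ → Esp n → ℝ :=
  fun t x => deriv (fun s => f s x) t

/-- Spatial partial derivative ∂_j of a function of (t, x). -/
def dx' {n : ℕ} (j : Fin n) (f : ℝ → Esp n → ℝ) : ℝ → Esp n → ℝ :=
  fun t x => fderiv ℝ (fun y => f t y) x (EuclideanSpace.single j 1)

/-- ∂_α for α : Fin (n+1); α = 0 is the time derivative, α = j+1 is ∂_j. -/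
def pd' {n : ℕ} (α : Fin (n + 1)) (f : ℝ → Esp n → ℝ) : ℝ → Esp n → ℝ :=
  Fin.cases (dt' f) (fun j => dx' j f) α

/-- Rotation generator Ω_{ij} = x_i ∂_j − x_j ∂_i. -/
def rot' {n : ℕ} (i j : Fin n) (f : ℝ → Esp n → ℝ) : ℝ → Esp n → ℝ :=
  fun t x => x i * dx' j f t x - x j * dx' i f t x

/-- Scaling operator S = t ∂_t + x · ∇. -/
def scl' {n : ℕ} (f : ℝ → Esp n → ℝ) : ℝ → Esp n → ℝ :=
  fun t x => t * dt' f t x + ∑ j, x j * dx' j f t x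

/-- Japanese bracket ⟨a⟩ = √(1 + a²). -/
def jap (a : ℝ) : ℝ := Real.sqrt (1 + a ^ 2)

/-- L² norm over ℝⁿ. -/
def L2n {n : ℕ} (g : Esp n → ℝ) : ℝ := Real.sqrt (∫ x, (g x) ^ 2)

/-- Lᵖ norm over ℝⁿ (p finite). -/
def Lpn {n : ℕ} (p : ℝ) (g : Esp n → ℝ) : ℝ := (∫ x, |g x| ^ p) ^ (1 / p)

/-- Energy E₁(v(t)) for speeds c. -/
def E1 {n N : ℕ} (c : Fin N → ℝ) (v : Fin N → ℝ → Esp n → ℝ) (t : ℝ) : ℝ :=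
  (1 / 2) * ∑ l, ∫ x, ((dt' (v l) t x) ^ 2 + (c l) ^ 2 * ∑ j, (dx' j (v l) t x) ^ 2)

/-- N₁(v(t)) = √E₁(v(t)). -/
def N1 {n N : ℕ} (c : Fin N → ℝ) (v : Fin N → ℝ → Esp n → ℝ) (t : ℝ) : ℝ :=
  Real.sqrt (E1 c v t)

/-- M₂(v(t)) = Σ_l Σ_{δ,j} ‖⟨c_l t − |x|⟩ ∂_δ ∂_j v^l(t)‖_{L²}. -/
def M2 {n N : ℕ} (c : Fin N → ℝ) (v : Fin N → ℝ → Esp n → ℝ) (t : ℝ) : ℝ :=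
  ∑ l, ∑ δ : Fin (n + 1), ∑ j : Fin n,
    L2n (fun x => jap (c l * t - ‖x‖) * pd' δ (dx' j (v l)) t x)

/-- Smoothness of all components of v, jointly in (t, x), for t in s. -/
def SmoothSTOn {n N : ℕ} (v : Fin N → ℝ → Esp n → ℝ) (s : Set ℝ) : Prop :=
  ∀ l, ContDiffOn ℝ (⊤ : ℕ∞) (fun p : ℝ × Esp n => v l p.1 p.2) (s ×ˢ (univ : Set (Esp n)))

/-- Compact support in x at each fixed time t ∈ s. -/
def CompactSupp {n N : ℕ} (v : Fin N → ℝ → Esp n → ℝ) (s : Set ℝ) : Prop :=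
  ∀ l, ∀ t ∈ s, HasCompactSupport (fun x => v l t x)

/-- Spherical Lᵖ norm of g on the sphere of radius r (w.r.t. the surface
measure on the unit sphere), i.e. ‖g(r·)‖_{L^p_ω(S^{n-1})}. -/
def sphLp {n : ℕ} (p : ℝ) (g : Esp n → ℝ) (r : ℝ) : ℝ :=
  (∫ ω : Metric.sphere (0 : Esp n) 1,
      |g (r • (ω : Esp n))| ^ p ∂((volume : Measure (Esp n)).toSphere)) ^ (1 / p)

/-- A single generator from Z̄ = {∂_j, Ω_{ij}} : either a spatial derivative or
a rotation. -/
def zg {n : ℕ} (g : Fin n ⊕ (Fin n × Fin n)) (f : ℝ → Esp n → ℝ) : ℝ → Esp n → ℝ :=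
  match g with
  | Sum.inl j => dx' j f
  | Sum.inr q => rot' q.1 q.2 f

/-- The wave operator ∂_t² − c²Δ. -/
def boxOp {n : ℕ} (cl : ℝ) (f : ℝ → Esp n → ℝ) : ℝ → Esp n → ℝ :=
  fun t x => dt' (dt' f) t x - cl ^ 2 * ∑ j, dx' j (dx' j f) t x

/-! For a unit vector `ω`, the fundamental theorem of calculus along the ray `s ↦ s • ω` gives
`r ^ (n-1) φ(rω)² = -∫_r^∞ ∂ₛ (s ^ (n-1) φ(sω)²) ds ≤ 2 ∫_0^∞ s ^ (n-1) |φ| |∂ᵣφ| (sω) ds`,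
the term `(n-1) s ^ (n-2) φ²` having the right sign to be dropped. Integrating over the sphere
recovers `2 ∫ |φ| |∂ᵣφ|` in polar coordinates, and Cauchy–Schwarz finishes the proof. -/

/-- Equal to `0` at the origin, since `‖0‖⁻¹ • 0 = 0`. -/
def radialDeriv {E : Type*} [NormedAddCommGroup E] [NormedSpace ℝ E] (φ : E → ℝ) (x : E) : ℝ :=
  fderiv ℝ φ x (‖x‖⁻¹ • x)

theorem pow_mul_sq_le_integral_Ioi {g : ℝ → ℝ} (hg : ContDiff ℝ 1 g) (hgc : HasCompactSupport g)
    (m : ℕ) {r : ℝ} (hr : 0 < r) :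
    r ^ m * g r ^ 2 ≤ ∫ s in Ioi 0, s ^ m * (2 * |g s| * |deriv g s|) := by
  set F : ℝ → ℝ := fun s => s ^ m * g s ^ 2
  set B : ℝ → ℝ := fun s => s ^ m * (2 * |g s| * |deriv g s|)
  have hF : ContDiff ℝ 1 F := (contDiff_id.pow m).mul (hg.pow 2)
  have hFc : HasCompactSupport F := hgc.mono fun s hs hgs => hs (by simp [F, hgs])
  have hderivF : ∀ s, deriv F s = m * s ^ (m - 1) * g s ^ 2 + s ^ m * (2 * g s * deriv g s) := by
    intro s
    have hgs := (hg.differentiable one_ne_zero s).hasDerivAt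
    have hFs : HasDerivAt F (m * s ^ (m - 1) * g s ^ 2 + s ^ m * (2 * g s ^ (2 - 1) * deriv g s))
        s := (hasDerivAt_pow m s).mul (hgs.pow 2)
    rw [hFs.deriv, pow_one]
  have hB : Continuous B :=
    (continuous_pow m).mul ((continuous_const.mul hg.continuous.abs).mul
      (hg.continuous_deriv le_rfl).abs)
  have hBc : HasCompactSupport B := hgc.mono fun s hs hgs => hs (by simp [B, hgs])
  have hB_nonneg : ∀ s ∈ Ioi (0 : ℝ), 0 ≤ B s := fun s hs => by
    have := hs.out.le
    positivity
  have h_neg_derivF_le : ∀ s ∈ Ioi r, -deriv F s ≤ B s := by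
    intro s hs
    have hs0 : 0 < s := hr.trans hs
    have hdrop : 0 ≤ m * s ^ (m - 1) * g s ^ 2 := by positivity
    have hcross : -(2 * g s * deriv g s) ≤ 2 * |g s| * |deriv g s| := by
      rw [mul_assoc, mul_assoc, ← abs_mul, ← mul_neg]
      exact mul_le_mul_of_nonneg_left (neg_le_abs _) zero_le_two
    rw [hderivF]
    nlinarith [mul_le_mul_of_nonneg_left hcross (pow_nonneg hs0.le m)]
  calc r ^ m * g r ^ 2 = ∫ s in Ioi r, -deriv F s := by
        rw [integral_neg, hFc.integral_Ioi_deriv_eq hF, neg_neg]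
    _ ≤ ∫ s in Ioi r, B s :=
        setIntegral_mono_on ((hF.continuous_deriv le_rfl).integrable_of_hasCompactSupport
          hFc.deriv).neg.integrableOn (hB.integrable_of_hasCompactSupport hBc).integrableOn
          measurableSet_Ioi h_neg_derivF_le
    _ ≤ ∫ s in Ioi 0, B s :=
        setIntegral_mono_set (hB.integrable_of_hasCompactSupport hBc).integrableOn
          (ae_restrict_of_forall_mem measurableSet_Ioi hB_nonneg)
          (Ioi_subset_Ioi hr.le).eventuallyLE

section RadialDeriv

variable {E : Type*} [NormedAddCommGroup E] [NormedSpace ℝ E]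

theorem radialDeriv_smul_of_pos (φ : E → ℝ) {ω : E} (hω : ‖ω‖ = 1) {s : ℝ} (hs : 0 < s) :
    radialDeriv φ (s • ω) = fderiv ℝ φ (s • ω) ω := by
  rw [radialDeriv, norm_smul, hω, mul_one, Real.norm_of_nonneg hs.le, smul_smul,
    inv_mul_cancel₀ hs.ne', one_smul]

theorem abs_radialDeriv_le (φ : E → ℝ) (x : E) : |radialDeriv φ x| ≤ ‖fderiv ℝ φ x‖ := by
  have hunit : ‖‖x‖⁻¹ • x‖ ≤ 1 := by
    rcases eq_or_ne x 0 with rfl | hx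
    · simp
    · rw [norm_smul, norm_inv, norm_norm, inv_mul_cancel₀ (norm_ne_zero_iff.2 hx)]
  exact ((fderiv ℝ φ x).le_of_opNorm_le_of_le le_rfl hunit).trans_eq (mul_one _)

theorem sq_mul_le_integral_Ioi_radialDeriv {φ : E → ℝ} (hφ : ContDiff ℝ 1 φ)
    (hφc : HasCompactSupport φ) (m : ℕ) {ω : E} (hω : ‖ω‖ = 1) {r : ℝ} (hr : 0 < r) :
    r ^ m * φ (r • ω) ^ 2 ≤
      ∫ s in Ioi 0, s ^ m * (2 * |φ (s • ω)| * |radialDeriv φ (s • ω)|) := by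
  have hline : ∀ s : ℝ, HasDerivAt (fun t : ℝ => t • ω) ω s := fun s => by
    simpa using (hasDerivAt_id s).smul_const ω
  have hderiv : ∀ s, deriv (fun t : ℝ => φ (t • ω)) s = fderiv ℝ φ (s • ω) ω := fun s =>
    ((hφ.differentiable one_ne_zero _).hasFDerivAt.comp_hasDerivAt s (hline s)).deriv
  have hω0 : ω ≠ 0 := norm_ne_zero_iff.1 (by rw [hω]; exact one_ne_zero)
  refine (pow_mul_sq_le_integral_Ioi (g := fun t => φ (t • ω))
    (hφ.comp (contDiff_id.smul contDiff_const))
    (hφc.comp_isClosedEmbedding (isClosedEmbedding_smul_left hω0)) m hr).trans_eq ?_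
  refine setIntegral_congr_fun measurableSet_Ioi fun s hs => ?_
  rw [hderiv, radialDeriv_smul_of_pos φ hω hs]

end RadialDeriv

theorem integral_volumeIoiPow (m : ℕ) (h : ℝ → ℝ) :
    ∫ s, h s ∂Measure.volumeIoiPow m = ∫ s in Ioi 0, s ^ m * h s := by
  simp only [Measure.volumeIoiPow, ENNReal.ofReal]
  rw [integral_withDensity_eq_integral_smul (measurable_subtype_coe.pow_const _).real_toNNReal,
    integral_subtype_comap measurableSet_Ioi fun a => (a ^ m).toNNReal • h a]
  refine setIntegral_congr_fun measurableSet_Ioi fun s hs => ?_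
  rw [NNReal.smul_def, Real.coe_toNNReal _ (pow_nonneg (le_of_lt hs) _), smul_eq_mul]

section Polar

open Module

variable {E : Type*} [NormedAddCommGroup E] [NormedSpace ℝ E]

theorem homeomorphUnitSphereProd_snd_smul_fst (x : ({0}ᶜ : Set E)) :
    ((homeomorphUnitSphereProd E x).2 : ℝ) • ((homeomorphUnitSphereProd E x).1 : E) = x := by
  rw [homeomorphUnitSphereProd_apply_fst_coe, homeomorphUnitSphereProd_apply_snd_coe,
    smul_inv_smul₀ (norm_ne_zero_iff.2 x.2)]

variable [FiniteDimensional ℝ E] [MeasurableSpace E] [BorelSpace E]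
  (μ : Measure E) [μ.IsAddHaarMeasure]

theorem MeasureTheory.Integrable.comp_polar {f : E → ℝ} (hf : Integrable f μ) :
    Integrable (fun p : Metric.sphere (0 : E) 1 × Ioi (0 : ℝ) => f ((p.2 : ℝ) • (p.1 : E)))
      (μ.toSphere.prod (Measure.volumeIoiPow (finrank ℝ E - 1))) := by
  rw [← (μ.measurePreserving_homeomorphUnitSphereProd).integrable_comp_emb
    (Homeomorph.measurableEmbedding _)]
  simp only [Function.comp_def, homeomorphUnitSphereProd_snd_smul_fst]
  exact (integrableOn_iff_comap_subtypeVal (measurableSet_singleton _).compl).1 hf.integrableOn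

theorem integrable_toSphere_integral_Ioi {f : E → ℝ} (hf : Integrable f μ) :
    Integrable (fun ω : Metric.sphere (0 : E) 1 =>
      ∫ s in Ioi 0, s ^ (finrank ℝ E - 1) * f (s • (ω : E))) μ.toSphere := by
  simp only [← integral_volumeIoiPow]
  exact (hf.comp_polar μ).integral_prod_left

variable [Nontrivial E]

theorem integral_eq_integral_polar (f : E → ℝ) :
    ∫ x, f x ∂μ = ∫ p, f ((p.2 : ℝ) • (p.1 : E))
      ∂(μ.toSphere.prod (Measure.volumeIoiPow (finrank ℝ E - 1))) := by
  rw [← (μ.measurePreserving_homeomorphUnitSphereProd).integral_comp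
      (Homeomorph.measurableEmbedding _)]
  conv_lhs => rw [← restrict_compl_singleton (μ := μ) 0,
    ← integral_subtype_comap (measurableSet_singleton _).compl]
  simp only [homeomorphUnitSphereProd_snd_smul_fst]

theorem integral_toSphere_integral_Ioi {f : E → ℝ} (hf : Integrable f μ) :
    ∫ ω, (∫ s in Ioi 0, s ^ (finrank ℝ E - 1) * f (s • (ω : E))) ∂μ.toSphere = ∫ x, f x ∂μ := by
  simp only [← integral_volumeIoiPow]
  rw [integral_eq_integral_polar μ, integral_prod _ (hf.comp_polar μ)]

end Polar

theorem integral_abs_mul_abs_le_sqrt_mul_sqrt {α : Type*} [MeasurableSpace α] {μ : Measure α}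
    {f g : α → ℝ} (hf : MemLp f 2 μ) (hg : MemLp g 2 μ) :
    ∫ x, |f x| * |g x| ∂μ ≤ √(∫ x, f x ^ 2 ∂μ) * √(∫ x, g x ^ 2 ∂μ) := by
  have habs_rpow_two : ∀ a : ℝ, |a| ^ (2 : ℝ) = a ^ 2 := fun a => by
    rw [Real.rpow_two, sq_abs]
  have h := integral_mul_le_Lp_mul_Lq_of_nonneg (μ := μ) (p := 2) (q := 2)
    Real.HolderConjugate.two_two
    (ae_of_all _ fun x => abs_nonneg (f x)) (ae_of_all _ fun x => abs_nonneg (g x))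
    (by simpa only [Real.norm_eq_abs, ENNReal.ofReal_ofNat] using hf.norm)
    (by simpa only [Real.norm_eq_abs, ENNReal.ofReal_ofNat] using hg.norm)
  rw [Real.sqrt_eq_rpow, Real.sqrt_eq_rpow]
  simpa only [habs_rpow_two] using h

section Strauss

open Module

variable {E : Type*} [NormedAddCommGroup E] [NormedSpace ℝ E] [FiniteDimensional ℝ E]
  [MeasurableSpace E] [BorelSpace E] (μ : Measure E) [μ.IsAddHaarMeasure]
  {φ : E → ℝ}

theorem memLp_radialDeriv (hφ : ContDiff ℝ 1 φ) (hφc : HasCompactSupport φ) (p : ℝ≥0∞) :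
    MemLp (radialDeriv φ) p μ := by
  have hmeas : Measurable (radialDeriv φ) := by
    unfold radialDeriv
    fun_prop
  refine ((hφ.continuous_fderiv one_ne_zero).memLp_of_hasCompactSupport (hφc.fderiv ℝ)).of_le
    hmeas.aestronglyMeasurable (ae_of_all _ fun x => ?_)
  simpa only [Real.norm_eq_abs, norm_norm] using abs_radialDeriv_le φ x

theorem integral_toSphere_pow_mul_sq_le [Nontrivial E] (hφ : ContDiff ℝ 1 φ)
    (hφc : HasCompactSupport φ) {r : ℝ} (hr : 0 < r) :
    ∫ ω, r ^ (finrank ℝ E - 1) * φ (r • (ω : E)) ^ 2 ∂μ.toSphere ≤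
      2 * ∫ x, |φ x| * |radialDeriv φ x| ∂μ := by
  have hint : Integrable (fun x => 2 * |φ x| * |radialDeriv φ x|) μ := by
    have hprod := (hφ.continuous.memLp_of_hasCompactSupport (μ := μ) (p := 2) hφc).integrable_mul
      (memLp_radialDeriv μ hφ hφc 2)
    simpa only [Pi.mul_apply, abs_mul, mul_assoc] using hprod.abs.const_mul 2
  have hsphere_int : Integrable (fun ω : Metric.sphere (0 : E) 1 =>
      r ^ (finrank ℝ E - 1) * φ (r • (ω : E)) ^ 2) μ.toSphere :=
    (by fun_prop : Continuous _).integrable_of_hasCompactSupport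
      (HasCompactSupport.of_compactSpace _)
  calc ∫ ω, r ^ (finrank ℝ E - 1) * φ (r • (ω : E)) ^ 2 ∂μ.toSphere
      ≤ ∫ ω, (∫ s in Ioi 0, s ^ (finrank ℝ E - 1) *
          (2 * |φ (s • (ω : E))| * |radialDeriv φ (s • (ω : E))|)) ∂μ.toSphere :=
        integral_mono hsphere_int (integrable_toSphere_integral_Ioi μ hint) fun ω =>
          sq_mul_le_integral_Ioi_radialDeriv hφ hφc _ (norm_eq_of_mem_sphere ω) hr
    _ = 2 * ∫ x, |φ x| * |radialDeriv φ x| ∂μ := by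
        rw [integral_toSphere_integral_Ioi μ hint, ← integral_const_mul]
        simp only [mul_assoc]

end Strauss

theorem sphLp_two_norm_rpow_mul {n : ℕ} (hn : 1 ≤ n) (φ : Esp n → ℝ) {r : ℝ} (hr : 0 < r) :
    sphLp 2 (fun x => ‖x‖ ^ (((n : ℝ) - 1) / 2) * φ x) r =
      √(∫ ω, r ^ (n - 1) * φ (r • (ω : Esp n)) ^ 2 ∂(volume : Measure (Esp n)).toSphere) := by
  rw [sphLp, Real.sqrt_eq_rpow]
  congr 1
  refine integral_congr_ae (ae_of_all _ fun ω => ?_)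
  have hexp : ((n : ℝ) - 1) / 2 * (2 : ℕ) = ((n - 1 : ℕ) : ℝ) := by
    push_cast [Nat.cast_sub hn]
    ring
  dsimp only
  rw [norm_smul, norm_eq_of_mem_sphere ω, mul_one, Real.norm_of_nonneg hr.le, Real.rpow_two,
    sq_abs, mul_pow, ← Real.rpow_mul_natCast hr.le, hexp, Real.rpow_natCast]

/-- Strauss inequality: for n ≥ 2 and smooth compactly supported φ,
‖r^{(n−1)/2} φ‖_{L_r^∞ L_ω^2(ℝⁿ)} ≤ √2 ‖∂_r φ‖_{L²}^{1/2} ‖φ‖_{L²}^{1/2}.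
(The L_r^∞ norm is expressed by quantifying over all radii r > 0.) -/
theorem stmt_8 : ∀ n : ℕ, 2 ≤ n → ∀ φ : Esp n → ℝ,
    ContDiff ℝ (⊤ : ℕ∞) φ → HasCompactSupport φ →
    ∀ r > (0 : ℝ),
      sphLp 2 (fun x => ‖x‖ ^ (((n : ℝ) - 1) / 2) * φ x) r
        ≤ Real.sqrt 2 * Real.sqrt (L2n fun x => (fderiv ℝ φ x) (‖x‖⁻¹ • x))
            * Real.sqrt (L2n φ) := by
  intro n hn φ hφ hφc r hr
  have : Nontrivial (Esp n) := Module.nontrivial_of_finrank_pos (R := ℝ)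
    (by rw [finrank_euclideanSpace_fin]; omega)
  have hφ1 : ContDiff ℝ 1 φ := hφ.of_le (by exact_mod_cast le_top)
  have hsphere := integral_toSphere_pow_mul_sq_le volume hφ1 hφc hr
  rw [finrank_euclideanSpace_fin] at hsphere
  have hcs := integral_abs_mul_abs_le_sqrt_mul_sqrt
    (hφ1.continuous.memLp_of_hasCompactSupport hφc) (memLp_radialDeriv volume hφ1 hφc 2)
  rw [sphLp_two_norm_rpow_mul (by omega) φ hr]
  calc √(∫ ω, r ^ (n - 1) * φ (r • (ω : Esp n)) ^ 2 ∂(volume : Measure (Esp n)).toSphere)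
      ≤ √(2 * (L2n φ * L2n (radialDeriv φ))) :=
        Real.sqrt_le_sqrt (hsphere.trans (by
          rw [L2n, L2n]; exact mul_le_mul_of_nonneg_left hcs zero_le_two))
    _ = √2 * √(L2n (radialDeriv φ)) * √(L2n φ) := by
        rw [Real.sqrt_mul zero_le_two, Real.sqrt_mul (x := L2n φ) (Real.sqrt_nonneg _)]
        ring
end
end

section
/- Consider the system (∂_t² − c_l²Δ)u^l = Σ_{i,j} Σ_{α,β,γ=0}^{3} G^{l,αβγ}_{ij} (∂_α u^i) ∂²_{βγ} u^j + Σ_{i,j} Σ_{α,β=0}^{3} H^{l,αβ}_{ij} (∂_α u^i) ∂_β u^j (l = 1,…,N) on (0,T) × ℝ³, with c_l > 0 and real constant coefficients. Then there exists ε* > 0, depending only on the speeds c_1,…,c_N and the coefficients G, H, with the following property: whenever u = (u^1,…,u^N) is a smooth solution of this system and (t,x) is a point at which max{ |Z̄^a ∂_α u^i(t,x)| : |a| ≤ 1, 0 ≤ α ≤ 3, 1 ≤ i ≤ N } ≤ ε*, then Σ_{i=1}^N |∂_t² u^i(t,x)| ≤ C Σ_{i=1}^N ( Σ_{1≤m≤3,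 0≤α≤3} |∂_m ∂_α u^i(t,x)| + Σ_{α=0}^{3} |∂_α u^i(t,x)| ), where C depends only on the speeds and the coefficients. -/
open MeasureTheory Real Set
open scoped ENNReal NNReal

noncomputable section

/-- u is a solution on (0,T) × ℝ³ of the quadratic quasi-linear system
(∂_t² − c_l²Δ)u^l = G^{l,αβγ}_{ij} (∂_α u^i) ∂²_{βγ} u^j + H^{l,αβ}_{ij} (∂_α u^i) ∂_β u^j. -/
def IsSol3 {N : ℕ} (c : Fin N → ℝ)
    (G : Fin N → Fin N → Fin N → Fin 4 → Fin 4 → Fin 4 → ℝ)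
    (H : Fin N → Fin N → Fin N → Fin 4 → Fin 4 → ℝ)
    (T : ℝ) (u : Fin N → ℝ → Esp 3 → ℝ) : Prop :=
  ∀ l, ∀ t ∈ Ioo (0 : ℝ) T, ∀ x,
    boxOp (c l) (u l) t x =
      (∑ i, ∑ j, ∑ α, ∑ β, ∑ γ,
        G l i j α β γ * pd' α (u i) t x * pd' β (pd' γ (u j)) t x)
      + ∑ i, ∑ j, ∑ α, ∑ β, H l i j α β * pd' α (u i) t x * pd' β (u j) t x

/-! The equation gives `∂_t² u^l = c_l² Δu^l + G (∂u)(∂²u) + H (∂u)(∂u)`. Every second derivative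
other than `∂_t² u^j` is bounded by the right-hand side (the mixed ones `∂_t ∂_m u` after
commuting them to `∂_m ∂_t u`), and in the quasilinear term `∂_t² u^j` only appears multiplied by
a first derivative `∂_α u^i`, which is at most `ε*`. Choosing `ε* ∑ |G| ≤ 1/2`, that term is
absorbed into the left-hand side. -/

open Finset Filter Topology Function

section Calculus

variable {E F : Type*} [NormedAddCommGroup E] [NormedSpace ℝ E]
  [NormedAddCommGroup F] [NormedSpace ℝ F]

theorem deriv_comp_prodMk_const {g : ℝ × E → F} {t : ℝ} {x : E}
    (hg : DifferentiableAt ℝ g (t, x)) :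
    deriv (fun s => g (s, x)) t = fderiv ℝ g (t, x) (1, 0) := by
  have hline : HasDerivAt (fun s : ℝ => (s, x)) ((1 : ℝ), (0 : E)) t :=
    (hasDerivAt_id t).prodMk (hasDerivAt_const t x)
  exact (hg.hasFDerivAt.comp_hasDerivAt t hline).deriv

theorem fderiv_comp_const_prodMk {g : ℝ × E → F} {t : ℝ} {x : E}
    (hg : DifferentiableAt ℝ g (t, x)) (v : E) :
    fderiv ℝ (fun y => g (t, y)) x v = fderiv ℝ g (t, x) (0, v) := by
  have hincl : HasFDerivAt (fun y : E => (t, y))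
      ((0 : E →L[ℝ] ℝ).prod (ContinuousLinearMap.id ℝ E)) x :=
    (hasFDerivAt_const t x).prodMk (hasFDerivAt_id x)
  rw [show (fun y => g (t, y)) = g ∘ Prod.mk t from rfl, (hg.hasFDerivAt.comp x hincl).fderiv]
  simp

end Calculus

section PartialDerivatives

variable {n : ℕ} {f : ℝ → Esp n → ℝ} {t : ℝ} {x : Esp n}

theorem pd'_succ (j : Fin n) (f : ℝ → Esp n → ℝ) : pd' j.succ f = dx' j f := rfl

theorem dt'_eq_fderiv_uncurry (hf : DifferentiableAt ℝ (uncurry f) (t, x)) :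
    dt' f t x = fderiv ℝ (uncurry f) (t, x) (1, 0) :=
  deriv_comp_prodMk_const hf

theorem dx'_eq_fderiv_uncurry (hf : DifferentiableAt ℝ (uncurry f) (t, x)) (m : Fin n) :
    dx' m f t x = fderiv ℝ (uncurry f) (t, x) (0, EuclideanSpace.single m 1) :=
  fderiv_comp_const_prodMk hf _

theorem dt'_dx'_comm (hf : ContDiffAt ℝ 2 (uncurry f) (t, x)) (m : Fin n) :
    dt' (dx' m f) t x = dx' m (dt' f) t x := by
  set e : Esp n := EuclideanSpace.single m 1
  have hdiff : ∀ᶠ p in 𝓝 (t, x), DifferentiableAt ℝ (uncurry f) p :=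
    (hf.eventually (by simp)).mono fun p hp => hp.differentiableAt (by simp)
  have hf' : DifferentiableAt ℝ (fderiv ℝ (uncurry f)) (t, x) :=
    (hf.fderiv_right (m := 1) (by norm_num)).differentiableAt (by simp)
  have hdir (v : ℝ × Esp n) : DifferentiableAt ℝ (fun p => fderiv ℝ (uncurry f) p v) (t, x) :=
    hf'.clm_apply (differentiableAt_const v)
  have hdx : (fun s => dx' m f s x) =ᶠ[𝓝 t] fun s => fderiv ℝ (uncurry f) (s, x) (0, e) :=
    ((continuous_id.prodMk continuous_const).tendsto t).eventually hdiff |>.mono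
      fun _ hs => dx'_eq_fderiv_uncurry hs m
  have hdt : (fun y => dt' f t y) =ᶠ[𝓝 x] fun y => fderiv ℝ (uncurry f) (t, y) (1, 0) :=
    ((continuous_const.prodMk continuous_id).tendsto x).eventually hdiff |>.mono
      fun _ hy => dt'_eq_fderiv_uncurry hy
  calc dt' (dx' m f) t x
      = fderiv ℝ (fderiv ℝ (uncurry f)) (t, x) (1, 0) (0, e) := by
        rw [dt', hdx.deriv_eq, deriv_comp_prodMk_const (hdir _),
          fderiv_clm_apply hf' (differentiableAt_const _)]
        simp
    _ = fderiv ℝ (fderiv ℝ (uncurry f)) (t, x) (0, e) (1, 0) :=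
        hf.isSymmSndFDerivAt (by simp) _ _
    _ = dx' m (dt' f) t x := by
        rw [dx', hdt.fderiv_eq, fderiv_comp_const_prodMk (hdir _),
          fderiv_clm_apply hf' (differentiableAt_const _)]
        simp [e]

theorem SmoothSTOn.contDiffAt {N : ℕ} {v : Fin N → ℝ → Esp n → ℝ} {s : Set ℝ}
    (hv : SmoothSTOn v s) (hs : IsOpen s) (ht : t ∈ s) (l : Fin N) (k : ℕ) :
    ContDiffAt ℝ k (uncurry (v l)) (t, x) :=
  ((hv l).contDiffAt (prod_mem_nhds (hs.mem_nhds ht) univ_mem)).of_le (by exact_mod_cast le_top)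

/-- Controls every derivative of `f` of order one and two except `∂_t² f`
(see `abs_pd'_pd'_le`). -/
def dxJetNorm (f : ℝ → Esp n → ℝ) (t : ℝ) (x : Esp n) : ℝ :=
  (∑ m : Fin n, ∑ α : Fin (n + 1), |dx' m (pd' α f) t x|) + ∑ α : Fin (n + 1), |pd' α f t x|

theorem dxJetNorm_nonneg : 0 ≤ dxJetNorm f t x := by
  unfold dxJetNorm
  positivity

theorem abs_pd'_le_dxJetNorm (α : Fin (n + 1)) : |pd' α f t x| ≤ dxJetNorm f t x :=
  (single_le_sum (f := fun α => |pd' α f t x|) (fun _ _ => abs_nonneg _) (mem_univ α)).trans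
    (le_add_of_nonneg_left (by positivity))

theorem abs_dx'_pd'_le_dxJetNorm (m : Fin n) (α : Fin (n + 1)) :
    |dx' m (pd' α f) t x| ≤ dxJetNorm f t x :=
  calc |dx' m (pd' α f) t x| ≤ ∑ α, |dx' m (pd' α f) t x| :=
        single_le_sum (f := fun α => |dx' m (pd' α f) t x|) (fun _ _ => abs_nonneg _) (mem_univ α)
    _ ≤ ∑ m, ∑ α, |dx' m (pd' α f) t x| :=
        single_le_sum (f := fun m => ∑ α, |dx' m (pd' α f) t x|) (fun _ _ => by positivity)
          (mem_univ m)
    _ ≤ dxJetNorm f t x := le_add_of_nonneg_right (by positivity)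

theorem abs_laplacian_le_dxJetNorm :
    |∑ m : Fin n, dx' m (dx' m f) t x| ≤ n * dxJetNorm f t x :=
  calc |∑ m : Fin n, dx' m (dx' m f) t x| ≤ ∑ _m : Fin n, dxJetNorm f t x :=
        (abs_sum_le_sum_abs _ _).trans
          (sum_le_sum fun m _ => abs_dx'_pd'_le_dxJetNorm (f := f) m m.succ)
    _ = n * dxJetNorm f t x := by simp

theorem abs_pd'_pd'_le (hf : ContDiffAt ℝ 2 (uncurry f) (t, x)) (β γ : Fin (n + 1)) :
    |pd' β (pd' γ f) t x| ≤ |dt' (dt' f) t x| + dxJetNorm f t x := by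
  cases β using Fin.cases with
  | zero =>
    cases γ using Fin.cases with
    | zero => exact le_add_of_nonneg_right dxJetNorm_nonneg
    | succ m =>
      have h := abs_dx'_pd'_le_dxJetNorm (f := f) (t := t) (x := x) m 0
      rw [pd'_succ, pd', Fin.cases_zero, dt'_dx'_comm hf]
      exact h.trans (le_add_of_nonneg_left (abs_nonneg _))
  | succ m => exact (abs_dx'_pd'_le_dxJetNorm m γ).trans (le_add_of_nonneg_left (abs_nonneg _))

end PartialDerivatives

theorem abs_sum_le_sum_of_abs_le {ι : Type*} {s : Finset ι} {f g : ι → ℝ}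
    (h : ∀ i ∈ s, |f i| ≤ g i) : |∑ i ∈ s, f i| ≤ ∑ i ∈ s, g i :=
  (abs_sum_le_sum_abs f s).trans (sum_le_sum h)

theorem abs_mul_mul_le (w : ℝ) {a b A B : ℝ} (ha : |a| ≤ A) (hb : |b| ≤ B) :
    |w * a * b| ≤ |w| * (A * B) := by
  rw [abs_mul, abs_mul, mul_assoc]
  exact mul_le_mul_of_nonneg_left
    (mul_le_mul ha hb (abs_nonneg _) ((abs_nonneg _).trans ha)) (abs_nonneg _)

def quasilinearCoeffSum {N : ℕ} (G : Fin N → Fin N → Fin N → Fin 4 → Fin 4 → Fin 4 → ℝ) : ℝ :=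
  ∑ l, ∑ i, ∑ j, ∑ α, ∑ β, ∑ γ, |G l i j α β γ|

def semilinearCoeffSum {N : ℕ} (H : Fin N → Fin N → Fin N → Fin 4 → Fin 4 → ℝ) : ℝ :=
  ∑ l, ∑ i, ∑ j, ∑ α, ∑ β, |H l i j α β|

theorem quasilinearCoeffSum_nonneg {N : ℕ}
    (G : Fin N → Fin N → Fin N → Fin 4 → Fin 4 → Fin 4 → ℝ) : 0 ≤ quasilinearCoeffSum G :=
  sum_nonneg fun _ _ => sum_nonneg fun _ _ => sum_nonneg fun _ _ =>
    sum_nonneg fun _ _ => sum_nonneg fun _ _ => sum_nonneg fun _ _ => abs_nonneg _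

theorem semilinearCoeffSum_nonneg {N : ℕ}
    (H : Fin N → Fin N → Fin N → Fin 4 → Fin 4 → ℝ) : 0 ≤ semilinearCoeffSum H :=
  sum_nonneg fun _ _ => sum_nonneg fun _ _ => sum_nonneg fun _ _ =>
    sum_nonneg fun _ _ => sum_nonneg fun _ _ => abs_nonneg _

namespace IsSol3

variable {N : ℕ} {c : Fin N → ℝ} {G : Fin N → Fin N → Fin N → Fin 4 → Fin 4 → Fin 4 → ℝ}
  {H : Fin N → Fin N → Fin N → Fin 4 → Fin 4 → ℝ} {T : ℝ} {u : Fin N → ℝ → Esp 3 → ℝ}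
  {t : ℝ} {x : Esp 3}

theorem dt'_dt'_eq (hsol : IsSol3 c G H T u) (ht : t ∈ Ioo 0 T) (l : Fin N) :
    dt' (dt' (u l)) t x = c l ^ 2 * ∑ m, dx' m (dx' m (u l)) t x
      + (∑ i, ∑ j, ∑ α, ∑ β, ∑ γ, G l i j α β γ * pd' α (u i) t x * pd' β (pd' γ (u j)) t x)
      + ∑ i, ∑ j, ∑ α, ∑ β, H l i j α β * pd' α (u i) t x * pd' β (u j) t x := by
  have h := hsol l t ht x
  rw [boxOp] at h
  linarith

theorem abs_dt'_dt'_le (hsol : IsSol3 c G H T u) (ht : t ∈ Ioo 0 T) {A A' B : ℝ}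
    (hA : ∀ i α, |pd' α (u i) t x| ≤ A) (hA' : ∀ j β, |pd' β (u j) t x| ≤ A')
    (hB : ∀ j β γ, |pd' β (pd' γ (u j)) t x| ≤ B) (l : Fin N) :
    |dt' (dt' (u l)) t x| ≤ c l ^ 2 * |∑ m, dx' m (dx' m (u l)) t x|
      + (∑ i, ∑ j, ∑ α, ∑ β, ∑ γ, |G l i j α β γ|) * (A * B)
      + (∑ i, ∑ j, ∑ α, ∑ β, |H l i j α β|) * (A * A') := by
  rw [hsol.dt'_dt'_eq ht l]
  refine (abs_add_three _ _ _).trans (add_le_add (add_le_add ?_ ?_) ?_)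
  · rw [abs_mul, abs_sq]
  · simp only [sum_mul]
    exact abs_sum_le_sum_of_abs_le fun i _ => abs_sum_le_sum_of_abs_le fun j _ =>
      abs_sum_le_sum_of_abs_le fun α _ => abs_sum_le_sum_of_abs_le fun β _ =>
      abs_sum_le_sum_of_abs_le fun γ _ => abs_mul_mul_le _ (hA i α) (hB j β γ)
  · simp only [sum_mul]
    exact abs_sum_le_sum_of_abs_le fun i _ => abs_sum_le_sum_of_abs_le fun j _ =>
      abs_sum_le_sum_of_abs_le fun α _ => abs_sum_le_sum_of_abs_le fun β _ =>
      abs_mul_mul_le _ (hA i α) (hA' j β)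

theorem sum_abs_dt'_dt'_le (hsol : IsSol3 c G H T u) (hu : SmoothSTOn u (Ioo 0 T))
    (ht : t ∈ Ioo 0 T) {ε : ℝ} (hε : ε ≤ 1) (hεG : ε * quasilinearCoeffSum G ≤ 1 / 2)
    (hsmall : ∀ i α, |pd' α (u i) t x| ≤ ε) :
    ∑ i, |dt' (dt' (u i)) t x| ≤
      (2 * (3 * ∑ l, c l ^ 2 + quasilinearCoeffSum G + semilinearCoeffSum H) + 1) *
        ∑ i, dxJetNorm (u i) t x := by
  set S := ∑ i, |dt' (dt' (u i)) t x|
  set R := ∑ i, dxJetNorm (u i) t x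
  have hS : ∀ i, |dt' (dt' (u i)) t x| ≤ S := fun i =>
    single_le_sum (f := fun i => |dt' (dt' (u i)) t x|) (fun _ _ => abs_nonneg _) (mem_univ i)
  have hR : ∀ i, dxJetNorm (u i) t x ≤ R := fun i =>
    single_le_sum (f := fun i => dxJetNorm (u i) t x) (fun _ _ => dxJetNorm_nonneg) (mem_univ i)
  have hl (l : Fin N) : |dt' (dt' (u l)) t x| ≤ c l ^ 2 * (3 * R)
      + (∑ i, ∑ j, ∑ α, ∑ β, ∑ γ, |G l i j α β γ|) * (ε * (S + R))
      + (∑ i, ∑ j, ∑ α, ∑ β, |H l i j α β|) * (ε * R) := by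
    have hΔ : |∑ m, dx' m (dx' m (u l)) t x| ≤ 3 * R := by
      refine abs_laplacian_le_dxJetNorm.trans ?_
      rw [Nat.cast_ofNat]
      exact mul_le_mul_of_nonneg_left (hR l) (by norm_num)
    have h := hsol.abs_dt'_dt'_le ht hsmall
      (fun j β => (abs_pd'_le_dxJetNorm β).trans (hR j))
      (fun j β γ => (abs_pd'_pd'_le (hu.contDiffAt isOpen_Ioo ht j 2) β γ).trans
        (add_le_add (hS j) (hR j))) l
    linarith [mul_le_mul_of_nonneg_left hΔ (sq_nonneg (c l))]
  have hsum : S ≤ (∑ l, c l ^ 2) * (3 * R) + quasilinearCoeffSum G * (ε * (S + R))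
      + semilinearCoeffSum H * (ε * R) := by
    refine (sum_le_sum fun l _ => hl l).trans (le_of_eq ?_)
    rw [sum_add_distrib, sum_add_distrib, ← sum_mul, ← sum_mul, ← sum_mul]
    rfl
  have hS0 : 0 ≤ S := sum_nonneg fun _ _ => abs_nonneg _
  have hR0 : 0 ≤ R := sum_nonneg fun _ _ => dxJetNorm_nonneg
  have hc : 0 ≤ (∑ l, c l ^ 2) * R := mul_nonneg (sum_nonneg fun _ _ => sq_nonneg _) hR0
  have hG := mul_nonneg (quasilinearCoeffSum_nonneg G) hR0
  have hH := mul_nonneg (semilinearCoeffSum_nonneg H) hR0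
  nlinarith [mul_nonneg (sub_nonneg.2 hεG) hS0, mul_nonneg (sub_nonneg.2 hε) hG,
    mul_nonneg (sub_nonneg.2 hε) hH]

end IsSol3

/-- there is ε* > 0 (depending only on speeds and coefficients)
such that wherever all |Z̄^a ∂_α u^i| (|a| ≤ 1) are ≤ ε*, one has
Σ_i |∂_t² u^i| ≤ C Σ_i (Σ_{m,α} |∂_m ∂_α u^i| + Σ_α |∂_α u^i|). -/
theorem stmt_11 :
    ∀ (N : ℕ) (c : Fin N → ℝ)
      (G : Fin N → Fin N → Fin N → Fin 4 → Fin 4 → Fin 4 → ℝ)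
      (H : Fin N → Fin N → Fin N → Fin 4 → Fin 4 → ℝ),
      (∀ l, 0 < c l) →
      ∃ εs > (0 : ℝ), ∃ C > (0 : ℝ),
        ∀ (T : ℝ) (u : Fin N → ℝ → Esp 3 → ℝ),
          SmoothSTOn u (Ioo 0 T) → IsSol3 c G H T u →
          ∀ t ∈ Ioo (0 : ℝ) T, ∀ x : Esp 3,
            ((∀ (i : Fin N) (α : Fin 4), |pd' α (u i) t x| ≤ εs) ∧
             (∀ (i : Fin N) (α : Fin 4) (g : Fin 3 ⊕ (Fin 3 × Fin 3)),
               |zg g (pd' α (u i)) t x| ≤ εs)) →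
            (∑ i, |dt' (dt' (u i)) t x|)
              ≤ C * ∑ i, ((∑ m : Fin 3, ∑ α : Fin 4, |dx' m (pd' α (u i)) t x|)
                  + ∑ α : Fin 4, |pd' α (u i) t x|) := by
  intro N c G H _
  have hG := quasilinearCoeffSum_nonneg G
  set ε := (2 * (quasilinearCoeffSum G + 1))⁻¹
  have hε : 0 < ε := inv_pos.2 (by linarith)
  have hε1 : ε ≤ 1 := inv_le_one_of_one_le₀ (by linarith)
  have hεG : ε * quasilinearCoeffSum G ≤ 1 / 2 := by
    rw [inv_mul_le_iff₀ (by linarith)]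
    linarith
  have hC : 0 < 2 * (3 * ∑ l, c l ^ 2 + quasilinearCoeffSum G + semilinearCoeffSum H) + 1 := by
    have hc : 0 ≤ ∑ l, c l ^ 2 := sum_nonneg fun l _ => sq_nonneg (c l)
    linarith [semilinearCoeffSum_nonneg H]
  exact ⟨ε, hε, _, hC, fun T u hu hsol t ht x hsmall =>
    hsol.sum_abs_dt'_dt'_le hu ht hε1 hεG hsmall.1⟩
end
end
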